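/- arXiv:2007.10674 — 2 statements merged into one kernel-verified Lean document; each statement's English description precedes it below -/
import Mathlib

section
/- The multiplicative degree-Kirchhoff index of S_n × K_2 equals (48n³ + 25n² - 180n + 116)/(3n + 6). -/
/-!
Swapping the two layers is an automorphism of `S_n × K_2`, so, ordering the vertices layer by
layer, its normalized Laplacian is `[[A, B], [B, A]]` with `B` diagonal (the rungs), and
`χ [[A, B], [B, A]] = χ (A + B) · χ (A - B)`. Both `A ± B` are arrowhead matrices: a centre
joined to leaves that share one diagonal entry `b`. Clearing the centre column with the leaf
columns gives `χ = (X - b)^(n-2) · q` with `q` quadratic, whose roots are `0, (3n-2)/(2n)` for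
`A + B` and `2, (n+2)/(2n)` for `A - B`. The index is then a finite sum over this explicit
spectrum.
-/

open Polynomial

/-- `S_n × K_2` on vertex set `Fin n × Fin 2` (star center: first coordinate `0`). -/
def snK2 (n : ℕ) : SimpleGraph (Fin n × Fin 2) :=
  SimpleGraph.fromRel (fun p q => (p.2 = q.2 ∧ (p.1.val = 0 ∨ q.1.val = 0)) ∨ p.1 = q.1)

instance (n : ℕ) : DecidableRel (snK2 n).Adj := by
  unfold snK2
  exact fun p q => decidable_of_iff _ (SimpleGraph.fromRel_adj _ p q).symm

/-- The normalized Laplacian matrix of a finite graph: `1` on the diagonal,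
`-1/√(dᵢdⱼ)` for edges, and `0` otherwise. -/
noncomputable def normLap {V : Type*} [Fintype V] [DecidableEq V] (G : SimpleGraph V)
    [DecidableRel G.Adj] : Matrix V V ℝ :=
  Matrix.of fun i j =>
    if i = j then 1
    else if G.Adj i j then -1 / Real.sqrt ((G.degree i : ℝ) * G.degree j) else 0

open Matrix SimpleGraph

namespace Matrix

variable {ι R : Type*} [Fintype ι] [DecidableEq ι] [CommRing R]

theorem charpoly_eq_of_mul_eq_mul {M N P Q : Matrix ι ι R} (hPQ : P * Q = 1)
    (h : M * P = P * N) : M.charpoly = N.charpoly := by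
  have hQP : Q * P = 1 := mul_eq_one_comm.mp hPQ
  calc M.charpoly = (P * (N * Q)).charpoly := by
        rw [← Matrix.mul_assoc, ← h, Matrix.mul_assoc, hPQ, Matrix.mul_one]
    _ = N.charpoly := by rw [charpoly_mul_comm, Matrix.mul_assoc, hQP, Matrix.mul_one]

theorem charpoly_fromBlocks_self (A B : Matrix ι ι R) :
    (fromBlocks A B B A).charpoly = (A + B).charpoly * (A - B).charpoly := by
  rw [← charpoly_fromBlocks_zero₂₁ (A + B) B]
  apply charpoly_eq_of_mul_eq_mul (P := fromBlocks 1 0 1 1) (Q := fromBlocks 1 0 (-1) 1)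
  · simp [fromBlocks_multiply]
  · simp only [fromBlocks_multiply]
    congr 1 <;> simp [add_comm]

theorem det_arrowhead [IsDomain R] {k : ℕ} (N : Matrix (Fin (k + 2)) (Fin (k + 2)) R) {p : R}
    (hp : p ≠ 0) (hdiag : ∀ i : Fin (k + 1), N i.succ i.succ = p)
    (hoff : ∀ i j : Fin (k + 1), i ≠ j → N i.succ j.succ = 0) :
    N.det = p ^ k * (N 0 0 * p - ∑ i : Fin (k + 1), N 0 i.succ * N i.succ 0) := by
  set s := ∑ i : Fin (k + 1), N 0 i.succ * N i.succ 0
  -- `N * U` replaces column `0` by `p • col 0 - ∑ j, N j 0 • col j`, which vanishes below the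
  -- corner, so `N * U` is upper triangular
  let U : Matrix (Fin (k + 2)) (Fin (k + 2)) R := of fun i j =>
    Fin.cases (Fin.cases p (fun _ => 0)) (fun i => Fin.cases (-N i.succ 0)
      (fun j => if i = j then 1 else 0)) i j
  have hNU_zero_zero : (N * U) 0 0 = N 0 0 * p - s := by
    simp [mul_apply, Fin.sum_univ_succ, U, s, sub_eq_add_neg]
  have hNU_succ_zero (i : Fin (k + 1)) : (N * U) i.succ 0 = 0 := by
    rw [mul_apply, Fin.sum_univ_succ]
    simp only [U, of_apply, Fin.cases_zero, Fin.cases_succ, mul_neg, Finset.sum_neg_distrib]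
    rw [Finset.sum_eq_single i (fun r _ hr => by rw [hoff i r (Ne.symm hr), zero_mul])
      (by simp), hdiag]
    ring
  have hNU_succ (i : Fin (k + 2)) (j : Fin (k + 1)) : (N * U) i j.succ = N i j.succ := by
    simp [mul_apply, Fin.sum_univ_succ, U]
  have hU : U.det = p := by
    rw [det_of_isLowerTriangular U ?_, Fin.prod_univ_succ]
    · simp [U]
    · intro i j hij
      cases j using Fin.cases with
      | zero => exact absurd hij (Fin.not_lt_zero _)
      | succ j =>
        cases i using Fin.cases with
        | zero => rfl
        | succ i => simp [U, (Fin.succ_lt_succ_iff.mp hij).ne]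
  have hNU : (N * U).det = (N 0 0 * p - s) * p ^ (k + 1) := by
    rw [det_of_isUpperTriangular ?_, Fin.prod_univ_succ]
    · simp [hNU_zero_zero, hNU_succ, hdiag]
    · intro i j hij
      cases j using Fin.cases with
      | zero =>
        cases i using Fin.cases with
        | zero => exact absurd hij (lt_irrefl _)
        | succ i => exact hNU_succ_zero i
      | succ j =>
        cases i using Fin.cases with
        | zero => exact absurd hij (Fin.not_lt_zero _)
        | succ i => rw [hNU_succ]; exact hoff i j (Fin.succ_lt_succ_iff.mp hij).ne'
  rw [det_mul, hU] at hNU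
  apply mul_right_cancel₀ hp
  rw [hNU]
  ring

theorem charpoly_arrowhead [IsDomain R] {k : ℕ} (M : Matrix (Fin (k + 2)) (Fin (k + 2)) R)
    {b : R} (hdiag : ∀ i : Fin (k + 1), M i.succ i.succ = b)
    (hoff : ∀ i j : Fin (k + 1), i ≠ j → M i.succ j.succ = 0) :
    M.charpoly = (X - C b) ^ k *
      ((X - C (M 0 0)) * (X - C b) - C (∑ i : Fin (k + 1), M 0 i.succ * M i.succ 0)) := by
  rw [charpoly, det_arrowhead _ (X_sub_C_ne_zero b)]
  · simp [charmatrix_apply_eq, charmatrix_apply_ne _ _ _ (Fin.succ_ne_zero _).symm, map_sum]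
  · intro i
    rw [charmatrix_apply_eq, hdiag]
  · intro i j hij
    rw [charmatrix_apply_ne _ _ _ (Fin.succ_injective _ |>.ne hij), hoff i j hij, map_zero,
      neg_zero]

end Matrix

theorem Polynomial.X_sub_C_mul_X_sub_C_sub_C {R : Type*} [CommRing R] {a b s r₁ r₂ : R}
    (hsum : r₁ + r₂ = a + b) (hprod : r₁ * r₂ = a * b - s) :
    (X - C a) * (X - C b) - C s = (X - C r₁) * (X - C r₂) := by
  obtain rfl : s = a * b - r₁ * r₂ := by linear_combination hprod
  obtain rfl : a = r₁ + r₂ - b := by linear_combination -hsum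
  simp only [map_sub, map_add, map_mul]
  ring

theorem Multiset.sum_map_inv_filter_ne_zero {K : Type*} [DivisionRing K] [DecidableEq K]
    (s : Multiset K) : ((s.filter (· ≠ 0)).map (·⁻¹)).sum = (s.map (·⁻¹)).sum := by
  induction s using Multiset.induction_on with
  | empty => simp
  | cons a s ih => by_cases ha : a = 0 <;> simp [ha, ih]

def Equiv.prodFinTwoEquivSum (α : Type*) : α × Fin 2 ≃ α ⊕ α where
  toFun p := if p.2 = 0 then .inl p.1 else .inr p.1
  invFun := Sum.elim (·, 0) (·, 1)
  left_inv := by rintro ⟨a, ε⟩; fin_cases ε <;> rfl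
  right_inv := by rintro (a | a) <;> rfl

namespace SimpleGraph

variable {V : Type*} [Fintype V] (G : SimpleGraph V) [DecidableRel G.Adj]

noncomputable def prismDiagBlock [DecidableEq V] : Matrix V V ℝ :=
  of fun i j => if i = j then 1 else
    if G.Adj i j then -1 / √((G.degree i + 1 : ℝ) * (G.degree j + 1)) else 0

noncomputable def prismOffDiagBlock [DecidableEq V] : Matrix V V ℝ :=
  diagonal fun i => -1 / (G.degree i + 1 : ℝ)

-- The prism is passed as `H` with `hH : H = G □ ⊤` so that any `DecidableRel H.Adj` instance,
-- such as the one of `snK2`, can be used.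
theorem degree_boxProd_top_fin_two {H : SimpleGraph (V × Fin 2)} [DecidableRel H.Adj]
    (hH : H = G □ ⊤) (x : V × Fin 2) : H.degree x = G.degree x.1 + 1 := by
  subst hH
  rw [degree_boxProd, IsRegularOfDegree.top]
  rfl

variable [DecidableEq V]

theorem reindex_normLap_prism {H : SimpleGraph (V × Fin 2)} [DecidableRel H.Adj]
    (hH : H = G □ ⊤) :
    (normLap H).reindex (Equiv.prodFinTwoEquivSum V) (Equiv.prodFinTwoEquivSum V) =
      fromBlocks (prismDiagBlock G) (prismOffDiagBlock G) (prismOffDiagBlock G)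
        (prismDiagBlock G) := by
  have hdeg := degree_boxProd_top_fin_two G hH
  have hrung (i j : V) :
      (if i = j then -1 / √((G.degree i + 1 : ℝ) * (G.degree j + 1)) else 0) =
        prismOffDiagBlock G i j := by
    rw [prismOffDiagBlock, diagonal_apply]
    split_ifs with h
    · rw [h, Real.sqrt_mul_self (by positivity)]
    · rfl
  subst hH
  ext (i | i) (j | j) <;>
    simp [normLap, prismDiagBlock, Equiv.prodFinTwoEquivSum, hdeg, boxProd_adj, hrung]

theorem charpoly_normLap_prism {H : SimpleGraph (V × Fin 2)} [DecidableRel H.Adj]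
    (hH : H = G □ ⊤) :
    (normLap H).charpoly =
      (prismDiagBlock G + prismOffDiagBlock G).charpoly *
        (prismDiagBlock G - prismOffDiagBlock G).charpoly := by
  rw [← charpoly_reindex (Equiv.prodFinTwoEquivSum V), reindex_normLap_prism G hH,
    charpoly_fromBlocks_self]

theorem charpoly_prismDiagBlock_add_smul_starGraph (k : ℕ) (σ : ℝ) :
    (prismDiagBlock (starGraph (0 : Fin (k + 2))) +
        σ • prismOffDiagBlock (starGraph (0 : Fin (k + 2)))).charpoly =
      (X - C (1 - σ / 2)) ^ k * ((X - C (1 - σ / (k + 2))) * (X - C (1 - σ / 2)) -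
        C ((k + 1) / (2 * (k + 2)) : ℝ)) := by
  have hleaf (i : Fin (k + 1)) : (starGraph (0 : Fin (k + 2))).degree i.succ = 1 :=
    degree_starGraph_of_ne_center (Fin.succ_ne_zero i)
  have hcenter : (starGraph (0 : Fin (k + 2))).degree 0 = k + 1 := by
    rw [degree_starGraph_center, Fintype.card_fin]; rfl
  set M := prismDiagBlock (starGraph (0 : Fin (k + 2))) +
    σ • prismOffDiagBlock (starGraph (0 : Fin (k + 2)))
  have hdiag (i : Fin (k + 1)) : M i.succ i.succ = 1 - σ / 2 := by
    simp only [M, prismDiagBlock, prismOffDiagBlock, Matrix.add_apply, Matrix.smul_apply, of_apply,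
      diagonal_apply_eq, hleaf, if_true, smul_eq_mul, Nat.cast_one]
    ring
  have hoff (i j : Fin (k + 1)) (hij : i ≠ j) : M i.succ j.succ = 0 := by
    simp [M, prismDiagBlock, prismOffDiagBlock, hij, Fin.succ_ne_zero]
  have hcorner : M 0 0 = 1 - σ / (k + 2) := by
    simp only [M, prismDiagBlock, prismOffDiagBlock, Matrix.add_apply, Matrix.smul_apply, of_apply,
      diagonal_apply_eq, hcenter, if_true, smul_eq_mul, Nat.cast_add, Nat.cast_one]
    ring
  have harms : ∑ i : Fin (k + 1), M 0 i.succ * M i.succ 0 = (k + 1) / (2 * (k + 2)) := by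
    simp only [M, prismDiagBlock, prismOffDiagBlock, Matrix.add_apply, Matrix.smul_apply, of_apply,
      diagonal_apply_ne _ (Fin.succ_ne_zero _), diagonal_apply_ne _ (Fin.succ_ne_zero _).symm,
      starGraph_adj, (Fin.succ_ne_zero _).symm, Fin.succ_ne_zero, hcenter, hleaf, if_false,
      ne_eq, not_false_eq_true, or_true, true_or, and_self, if_true, smul_eq_mul, mul_zero,
      add_zero, Nat.cast_add, Nat.cast_one, Finset.sum_const, Finset.card_univ, Fintype.card_fin,
      nsmul_eq_mul]
    rw [mul_comm (1 + 1 : ℝ), neg_div, neg_mul_neg, div_mul_div_comm, one_mul,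
      Real.mul_self_sqrt (by positivity)]
    field_simp
    ring
  rw [charpoly_arrowhead M hdiag hoff, hcorner, harms]

end SimpleGraph

theorem snK2_eq_boxProd (n : ℕ) [NeZero n] : snK2 n = starGraph 0 □ ⊤ := by
  ext p q
  simp only [snK2, fromRel_adj, boxProd_adj, starGraph_adj, top_adj, Fin.val_eq_zero_iff,
    Prod.ext_iff, ne_eq]
  tauto

theorem charpoly_normLap_snK2 (k : ℕ) :
    (normLap (snK2 (k + 2))).charpoly =
      ((Multiset.replicate k (1 / 2 : ℝ) + Multiset.replicate k (3 / 2) +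
        {0, 2, (k + 4 : ℝ) / (2 * k + 4), (3 * k + 4 : ℝ) / (2 * k + 4)}).map
          (X - C ·)).prod := by
  have hplus := charpoly_prismDiagBlock_add_smul_starGraph k 1
  have hminus := charpoly_prismDiagBlock_add_smul_starGraph k (-1)
  rw [one_smul, show (1 : ℝ) - 1 / 2 = 1 / 2 by norm_num] at hplus
  rw [neg_one_smul, ← sub_eq_add_neg, show (1 : ℝ) - -1 / 2 = 3 / 2 by norm_num] at hminus
  have hk : (k : ℝ) + 2 ≠ 0 := by positivity
  rw [charpoly_normLap_prism _ (snK2_eq_boxProd _), hplus, hminus,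
    X_sub_C_mul_X_sub_C_sub_C (r₁ := (0 : ℝ)) (r₂ := (3 * k + 4) / (2 * k + 4)),
    X_sub_C_mul_X_sub_C_sub_C (r₁ := (2 : ℝ)) (r₂ := (k + 4) / (2 * k + 4))]
  · simp only [Multiset.insert_eq_cons, Multiset.add_cons, Multiset.map_cons, Multiset.map_add,
      Multiset.map_replicate, Multiset.map_singleton, Multiset.prod_cons, Multiset.prod_add,
      Multiset.prod_replicate, Multiset.prod_singleton, map_zero, sub_zero, one_div]
    ring
  all_goals field_simp; ring

/-- The multiplicative degree-Kirchhoff index of `S_n × K_2` (with `m = 3n - 2` edges),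
i.e. `2m` times the sum of the reciprocals of the nonzero normalized Laplacian eigenvalues
(counted with multiplicity, as roots of the characteristic polynomial of the normalized
Laplacian), equals `(48n³ + 25n² - 180n + 116)/(3n + 6)`. -/
theorem mult_deg_kirchhoff_snK2 (n : ℕ) (hn : 2 ≤ n) :
    (2 * (3 * n - 2) : ℝ) *
        (((normLap (snK2 n)).charpoly.roots.filter (fun ν => ν ≠ 0)).map
          (fun ν => ν⁻¹)).sum =
      (48 * n ^ 3 + 25 * n ^ 2 - 180 * n + 116) / (3 * n + 6) := by
  obtain ⟨k, rfl⟩ : ∃ k, n = k + 2 := ⟨n - 2, by omega⟩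
  rw [charpoly_normLap_snK2, roots_multiset_prod_X_sub_C, Multiset.sum_map_inv_filter_ne_zero]
  simp only [Multiset.insert_eq_cons, Multiset.add_cons, Multiset.map_cons, Multiset.map_add,
    Multiset.map_replicate, Multiset.map_singleton, Multiset.sum_cons, Multiset.sum_add,
    Multiset.sum_replicate, Multiset.sum_singleton, nsmul_eq_mul, inv_div, Nat.cast_add,
    Nat.cast_ofNat]
  field_simp
  ring
end

section
/- Let M be the n×n matrix with M(1,1)=n+1, M(1,j)=M(j,1)=-1 for j≥2, diagonal entries M(j,j) ∈ {1,3} for j≥2 with exactly r of them equal to 1 and n-r-1 equal to 3 (where 1 ≤ r ≤ n-2), and all other entries 0. Then the characteristic polynomial of M is [λ³ - (n+5)λ² + (3n+8)λ + 2r - 2n - 4]·(λ-1)^(r-1)·(λ-3)^(n-r-2). -/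
/-!
Splitting off the index `0`, `λI - M` is an arrowhead matrix: corner `λ - (n + 1)`, border
entries `1`, diagonal `λ - d_j`. Taking the Schur complement of the diagonal block gives
`det (λI - M) = (λ - n - 1) p(λ) - Σ_j ∏_{k ≠ j} (λ - d_k) = (λ - n - 1) p(λ) - p'(λ)` with
`p = ∏_j (λ - d_j) = (λ - 1)^r (λ - 3)^(n-r-1)`, and `(λ - 1)^(r-1) (λ - 3)^(n-r-2)` divides both
terms, leaving the cubic.
-/

open Polynomial
open scoped Finset

namespace Matrix

variable {R ι : Type*} [DecidableEq ι]

def arrowhead [Zero R] (a : R) (b c q : ι → R) : Matrix (Unit ⊕ ι) (Unit ⊕ ι) R :=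
  fromBlocks (of fun _ _ => a) (replicateRow Unit b) (replicateCol Unit c) (diagonal q)

lemma arrowhead_map [Zero R] {S : Type*} [Zero S] (f : R → S) (hf : f 0 = 0) (a : R)
    (b c q : ι → R) :
    (arrowhead a b c q).map f =
      arrowhead (f a) (fun j => f (b j)) (fun i => f (c i)) (fun j => f (q j)) := by
  ext (i | i) (j | j) <;> simp [arrowhead, diagonal_apply, apply_ite f, hf]

lemma det_arrowhead_of_ne_zero [Fintype ι] {K : Type*} [Field K] (a : K) (b c q : ι → K)
    (hq : ∀ j, q j ≠ 0) :
    (arrowhead a b c q).det = (∏ j, q j) * (a - ∑ j, b j * c j / q j) := by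
  let : Invertible q :=
    ⟨fun j => (q j)⁻¹, funext fun j => inv_mul_cancel₀ (hq j),
      funext fun j => mul_inv_cancel₀ (hq j)⟩
  let := diagonalInvertible q
  rw [arrowhead, det_fromBlocks₂₂, invOf_diagonal_eq, det_diagonal, det_unique]
  congr 2
  simp only [sub_apply, of_apply, mul_apply, replicateRow_apply, replicateCol_apply,
    diagonal_apply, mul_ite, mul_zero, Finset.sum_ite_eq', Finset.mem_univ, if_true]
  refine congrArg (a - ·) (Finset.sum_congr rfl fun j _ => ?_)
  change b j * (q j)⁻¹ * c j = _
  ring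

lemma det_arrowhead_s15 [Fintype ι] [CommRing R] [IsDomain R] (a : R) (b c q : ι → R)
    (hq : ∀ j, q j ≠ 0) :
    (arrowhead a b c q).det =
      a * ∏ j, q j - ∑ j, b j * c j * ∏ k ∈ Finset.univ.erase j, q k := by
  let φ := algebraMap R (FractionRing R)
  have hφ : Function.Injective φ := IsFractionRing.injective R (FractionRing R)
  have hφq : ∀ j, φ (q j) ≠ 0 := fun j => (map_ne_zero_iff φ hφ).2 (hq j)
  apply hφ
  rw [RingHom.map_det, RingHom.mapMatrix_apply, arrowhead_map _ φ.map_zero,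
    det_arrowhead_of_ne_zero _ _ _ _ hφq]
  simp only [map_sub, map_sum, _root_.map_mul, map_prod, mul_sub, Finset.mul_sum]
  rw [mul_comm]
  congr 1
  refine Finset.sum_congr rfl fun j _ => ?_
  rw [← Finset.mul_prod_erase _ _ (Finset.mem_univ j)]
  field_simp [hφq j]

lemma charmatrix_arrowhead [Fintype ι] [CommRing R] (a : R) (b c q : ι → R) :
    charmatrix (arrowhead a b c q) =
      arrowhead (X - C a) (fun j => -C (b j)) (fun i => -C (c i)) (fun j => X - C (q j)) := by
  rw [arrowhead, charmatrix_fromBlocks]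
  ext (i | i) (j | j) <;> simp [arrowhead, diagonal_apply]

lemma charpoly_arrowhead_s15 [Fintype ι] [CommRing R] [IsDomain R] (a : R) (b c q : ι → R) :
    (arrowhead a b c q).charpoly = (X - C a) * ∏ j, (X - C (q j)) -
      ∑ j, C (b j * c j) * ∏ k ∈ Finset.univ.erase j, (X - C (q k)) := by
  rw [charpoly, charmatrix_arrowhead, det_arrowhead_s15 _ _ _ _ fun j => X_sub_C_ne_zero _]
  simp

lemma charpoly_eq_of_succ_offDiag_eq_zero [CommRing R] [IsDomain R] {m : ℕ}
    (A : Matrix (Fin (m + 1)) (Fin (m + 1)) R)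
    (hA : ∀ i j : Fin m, i ≠ j → A i.succ j.succ = 0) :
    A.charpoly = (X - C (A 0 0)) * ∏ j : Fin m, (X - C (A j.succ j.succ)) -
      ∑ j : Fin m, C (A 0 j.succ * A j.succ 0) *
        ∏ k ∈ Finset.univ.erase j, (X - C (A k.succ k.succ)) := by
  let e : Fin (m + 1) ≃ Unit ⊕ Fin m :=
    (finSuccEquiv m).trans ((Equiv.optionEquivSumPUnit _).trans (Equiv.sumComm _ _))
  have hAe : reindex e e A = arrowhead (A 0 0) (fun j => A 0 j.succ) (fun i => A i.succ 0)
      (fun j => A j.succ j.succ) := by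
    ext (i | i) (j | j) <;> simp [e, arrowhead, diagonal_apply]
    split_ifs with h
    · rw [h]
    · exact hA i j h
  rw [← charpoly_reindex e, hAe, charpoly_arrowhead_s15]

end Matrix

lemma Finset.prod_eq_pow_mul_pow {M ι : Type*} [CommMonoid M] (s : Finset ι) (p : ι → Prop)
    [DecidablePred p] {f : ι → M} {u v : M} (hu : ∀ i ∈ s, p i → f i = u)
    (hv : ∀ i ∈ s, ¬p i → f i = v) :
    ∏ i ∈ s, f i = u ^ #{i ∈ s | p i} * v ^ #{i ∈ s | ¬p i} := by
  rw [← prod_filter_mul_prod_filter_not s p,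
    prod_eq_pow_card fun i hi => hu i (mem_filter.1 hi).1 (mem_filter.1 hi).2,
    prod_eq_pow_card fun i hi => hv i (mem_filter.1 hi).1 (mem_filter.1 hi).2]

namespace Polynomial

variable {R ι : Type*} [CommRing R]

lemma prod_X_sub_C_eq_pow_mul_pow [DecidableEq R] [Fintype ι] {q : ι → R} {u v : R}
    (hq : ∀ i, q i = u ∨ q i = v) :
    ∏ i, (X - C (q i)) =
      (X - C u) ^ #{i | q i = u} * (X - C v) ^ (Fintype.card ι - #{i | q i = u}) := by
  rw [Finset.prod_eq_pow_mul_pow _ (q · = u) (fun i _ h => by rw [h])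
    (fun i _ h => by rw [(hq i).resolve_left h]), ← Finset.card_univ,
    ← Finset.card_filter_add_card_filter_not (s := Finset.univ) (q · = u), Nat.add_sub_cancel_left]

lemma sum_prod_erase_X_sub_C [DecidableEq ι] (s : Finset ι) (q : ι → R) :
    ∑ j ∈ s, ∏ k ∈ s.erase j, (X - C (q k)) = derivative (∏ j ∈ s, (X - C (q j))) := by
  simp [derivative_prod_finset]

end Polynomial

theorem charpoly_LS_case2_general (n r : ℕ) (hr : 1 ≤ r) (hrn : r ≤ n - 2)
    (d : Fin n → ℝ)
    (hd : ∀ j : Fin n, j.val ≠ 0 → d j = 1 ∨ d j = 3)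
    (hcard : (Finset.univ.filter (fun j : Fin n => j.val ≠ 0 ∧ d j = 1)).card = r)
    (M : Matrix (Fin n) (Fin n) ℝ)
    (hM : M = Matrix.of fun i j =>
      if i = j then (if i.val = 0 then (n : ℝ) + 1 else d i)
      else if i.val = 0 ∨ j.val = 0 then -1 else 0) :
    M.charpoly =
      (X ^ 3 - C ((n : ℝ) + 5) * X ^ 2 + C (3 * (n : ℝ) + 8) * X +
          C (2 * (r : ℝ) - 2 * n - 4)) *
        (X - 1) ^ (r - 1) * (X - 3) ^ (n - r - 2) := by
  obtain ⟨m, rfl⟩ : ∃ m, n = m + 1 := ⟨n - 1, by omega⟩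
  obtain ⟨s, rfl⟩ : ∃ s, r = s + 1 := ⟨r - 1, by omega⟩
  obtain ⟨t, rfl⟩ : ∃ t, m = s + t + 2 := ⟨m - s - 2, by omega⟩
  have hones : (Finset.univ.filter fun j : Fin (s + t + 2) => d j.succ = 1).card = s + 1 := by
    simpa [Fin.card_filter_univ_succ] using hcard
  have hprod : ∏ j : Fin (s + t + 2), (X - C (d j.succ)) =
      (X - C 1) ^ (s + 1) * (X - C 3) ^ (t + 1) := by
    rw [prod_X_sub_C_eq_pow_mul_pow fun j => hd j.succ (by simp), hones, Fintype.card_fin,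
      show s + t + 2 - (s + 1) = t + 1 by omega]
  have hcorner : M 0 0 = ((s + t + 2 + 1 : ℕ) : ℝ) + 1 := by simp [hM]
  have hdiag : ∀ j : Fin (s + t + 2), M j.succ j.succ = d j.succ := by simp [hM]
  have hborder : ∀ j : Fin (s + t + 2), M 0 j.succ * M j.succ 0 = 1 := by
    simp [hM, (Fin.succ_ne_zero _).symm]
  rw [Matrix.charpoly_eq_of_succ_offDiag_eq_zero M fun i j h => by simp [hM, h]]
  simp only [hcorner, hdiag, hborder, map_one, one_mul]
  rw [sum_prod_erase_X_sub_C, hprod, derivative_mul, derivative_X_sub_C_pow,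
    derivative_X_sub_C_pow, show s + t + 2 + 1 - (s + 1) - 2 = t by omega]
  simp only [add_tsub_cancel_right, map_add, map_sub, _root_.map_mul, map_natCast, C_ofNat,
    map_one]
  push_cast
  ring

/-- Characteristic polynomial of the arrowhead matrix `L_S` (case `11' ∈ E`): first
row/column `(n+1, -1, …, -1)`, remaining diagonal entries in `{1, 3}` with exactly
`r` of them equal to `1` (and `n-r-1` equal to `3`), other entries `0`.  Then
`Φ(M, λ) = [λ³ - (n+5)λ² + (3n+8)λ + 2r - 2n - 4]·(λ-1)^(r-1)·(λ-3)^(n-r-2)`. -/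
theorem charpoly_LS_case2 (n r : ℕ) (hn : 3 ≤ n) (hr : 1 ≤ r) (hrn : r ≤ n - 2)
    (d : Fin n → ℝ)
    (hd : ∀ j : Fin n, j.val ≠ 0 → d j = 1 ∨ d j = 3)
    (hcard : (Finset.univ.filter (fun j : Fin n => j.val ≠ 0 ∧ d j = 1)).card = r)
    (M : Matrix (Fin n) (Fin n) ℝ)
    (hM : M = Matrix.of fun i j =>
      if i = j then (if i.val = 0 then (n : ℝ) + 1 else d i)
      else if i.val = 0 ∨ j.val = 0 then -1 else 0) :
    M.charpoly =
      (X ^ 3 - C ((n : ℝ) + 5) * X ^ 2 + C (3 * (n : ℝ) + 8) * X +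
          C (2 * (r : ℝ) - 2 * n - 4)) *
        (X - 1) ^ (r - 1) * (X - 3) ^ (n - r - 2) :=
  charpoly_LS_case2_general n r hr hrn d hd hcard M hM
end
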